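/- arXiv:2403.12350 — 3 statements merged into one kernel-verified Lean document; each statement's English description precedes it below -/
import Mathlib

section
/- Let d ≥ 1, let L : ℝ^d → ℝ be differentiable with ∇L β-Lipschitz for some β > 0, and let P : ℝ^d → ℝ^d be any β-Lipschitz map. Let w, w' ∈ ℝ^d with ‖w' − w‖ ≤ ρ for some ρ ≥ 0, and let γ ≥ 0 satisfy β·γ ≤ 1. Set w⁺ := w − γ·P(w'). Then L(w⁺) ≤ L(w) − (γ²β/2)·‖∇L(w)‖² + γ²β·‖P(w') − ∇L(w')‖² + γ²β³ρ² − (1 − βγ)·γ·⟨∇L(w), P(w)⟩ + (1 − βγ)·γ·((1/2)·‖∇L(w)‖² + (1/2)·β²ρ²). -/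
/-!
The descent lemma for the `β`-smooth `L` gives
`L w⁺ ≤ L w - γ ⟪∇L w, P w'⟫ + (βγ²/2) ‖P w'‖²`, and expanding `‖P w'‖²` around `∇L w` turns
this into `L w - (1 - βγ) γ ⟪∇L w, P w'⟫ + (βγ²/2) (‖P w' - ∇L w‖² - ‖∇L w‖²)`. Both stray
terms are moved back to the points of the bound at a cost controlled by `‖w' - w‖ ≤ ρ`: since
`∇L` is `β`-Lipschitz, `‖P w' - ∇L w‖² ≤ 2 ‖P w' - ∇L w'‖² + 2 β² ρ²`, and since `P` is,
Cauchy–Schwarz and AM–GM give `⟪∇L w, P w⟫ ≤ ⟪∇L w, P w'⟫ + ½ ‖∇L w‖² + ½ β² ρ²`, which enters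
with the weight `(1 - βγ) γ ≥ 0`.
-/

theorem LipschitzWith.norm_sub_le_of_toNNReal {E F : Type*} [SeminormedAddCommGroup E]
    [SeminormedAddCommGroup F] {f : E → F} {β r : ℝ} (hβ : 0 ≤ β)
    (hf : LipschitzWith β.toNNReal f) {a b : E} (h : ‖a - b‖ ≤ r) : ‖f a - f b‖ ≤ β * r := by
  simpa [Real.coe_toNNReal _ hβ] using hf.norm_sub_le_of_le h

theorem norm_sub_sq_le_of_norm_sub_le {E : Type*} [SeminormedAddCommGroup E] {a b c : E} {r : ℝ}
    (h : ‖b - c‖ ≤ r) : ‖a - c‖ ^ 2 ≤ 2 * ‖a - b‖ ^ 2 + 2 * r ^ 2 := by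
  have htri : ‖a - c‖ ≤ ‖a - b‖ + r :=
    (norm_sub_le_norm_sub_add_norm_sub a b c).trans (by linarith)
  nlinarith [norm_nonneg (a - c), sq_nonneg (‖a - b‖ - r)]

theorem real_inner_le_real_inner_add_of_norm_sub_le {F : Type*} [SeminormedAddCommGroup F]
    [InnerProductSpace ℝ F] {x y z : F} {r : ℝ} (h : ‖y - z‖ ≤ r) :
    inner ℝ x y ≤ inner ℝ x z + (1 / 2 * ‖x‖ ^ 2 + 1 / 2 * r ^ 2) := by
  have hcs : inner ℝ x (y - z) ≤ ‖x‖ * r :=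
    (real_inner_le_norm x (y - z)).trans (mul_le_mul_of_nonneg_left h (norm_nonneg x))
  rw [inner_sub_right] at hcs
  nlinarith [sq_nonneg (‖x‖ - r)]

section Smooth

variable {E : Type*} [NormedAddCommGroup E] [InnerProductSpace ℝ E] [CompleteSpace E] {f : E → ℝ}

theorem HasGradientAt.hasDerivAt_comp_add_smul {f' x v : E} {t : ℝ}
    (hf : HasGradientAt f f' (x + t • v)) :
    HasDerivAt (fun s : ℝ => f (x + s • v)) (inner ℝ f' v) t := by
  have hline : HasDerivAt (fun s : ℝ => x + s • v) v t := by
    simpa using ((hasDerivAt_id t).smul_const v).const_add x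
  simpa [Function.comp_def] using hf.hasFDerivAt.comp_hasDerivAt t hline

theorem inner_gradient_add_smul_le {β : ℝ} (hβ : 0 ≤ β)
    (hlip : LipschitzWith β.toNNReal (gradient f)) (x v : E) {t : ℝ} (ht : 0 ≤ t) :
    inner ℝ (gradient f (x + t • v)) v ≤ inner ℝ (gradient f x) v + β * t * ‖v‖ ^ 2 := by
  have hgrad : ‖gradient f (x + t • v) - gradient f x‖ ≤ β * (t * ‖v‖) :=
    hlip.norm_sub_le_of_toNNReal hβ (by simp [norm_smul, abs_of_nonneg ht])
  have hcs := (real_inner_le_norm _ v).trans (mul_le_mul_of_nonneg_right hgrad (norm_nonneg v))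
  rw [inner_sub_left] at hcs
  linarith

theorem le_add_inner_gradient_add_norm_sq {β : ℝ} (hβ : 0 ≤ β) (hf : Differentiable ℝ f)
    (hlip : LipschitzWith β.toNNReal (gradient f)) (x y : E) :
    f y ≤ f x + inner ℝ (gradient f x) (y - x) + β / 2 * ‖y - x‖ ^ 2 := by
  set v := y - x
  have hderiv (t : ℝ) :
      HasDerivAt (fun s : ℝ => f (x + s • v)) (inner ℝ (gradient f (x + t • v)) v) t :=
    (hf _).hasGradientAt.hasDerivAt_comp_add_smul
  have hmodel (t : ℝ) :
      HasDerivAt (fun s : ℝ => f x + s * inner ℝ (gradient f x) v + β / 2 * s ^ 2 * ‖v‖ ^ 2)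
        (inner ℝ (gradient f x) v + β * t * ‖v‖ ^ 2) t := by
    refine ((((hasDerivAt_id' t).mul_const _).const_add (f x)).add
      (((hasDerivAt_pow 2 t).const_mul (β / 2)).mul_const (‖v‖ ^ 2))).congr_deriv ?_
    ring
  have hcomp := image_le_of_deriv_right_le_deriv_boundary (a := 0) (b := 1)
    (fun t _ => (hderiv t).continuousAt.continuousWithinAt)
    (fun t _ => (hderiv t).hasDerivWithinAt) (by simp)
    (fun t _ => (hmodel t).continuousAt.continuousWithinAt)
    (fun t _ => (hmodel t).hasDerivWithinAt)
    (fun t ht => inner_gradient_add_smul_le hβ hlip x v ht.1)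
    (Set.right_mem_Icc.2 zero_le_one)
  simpa [v] using hcomp

end Smooth

theorem fsam_one_step_bound_general {d : ℕ}
    (L : EuclideanSpace ℝ (Fin d) → ℝ) (β : ℝ) (hβ : 0 < β)
    (hdiff : Differentiable ℝ L)
    (hlip : LipschitzWith β.toNNReal (gradient L))
    (P : EuclideanSpace ℝ (Fin d) → EuclideanSpace ℝ (Fin d))
    (hP : LipschitzWith β.toNNReal P)
    (w w' : EuclideanSpace ℝ (Fin d)) (ρ : ℝ) (hww' : ‖w' - w‖ ≤ ρ)
    (γ : ℝ) (hγ : 0 ≤ γ) (hβγ : β * γ ≤ 1) :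
    L (w - γ • P w') ≤
      L w - (γ ^ 2 * β / 2) * ‖gradient L w‖ ^ 2
        + γ ^ 2 * β * ‖P w' - gradient L w'‖ ^ 2
        + γ ^ 2 * β ^ 3 * ρ ^ 2
        - (1 - β * γ) * γ * (inner ℝ (gradient L w) (P w) : ℝ)
        + (1 - β * γ) * γ * ((1 / 2) * ‖gradient L w‖ ^ 2 + (1 / 2) * β ^ 2 * ρ ^ 2) := by
  have hdescent : L (w - γ • P w') ≤
      L w - γ * inner ℝ (gradient L w) (P w') + β / 2 * (γ ^ 2 * ‖P w'‖ ^ 2) := by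
    simpa [inner_neg_right, real_inner_smul_right, norm_smul, abs_of_nonneg hγ, mul_pow,
      ← sub_eq_add_neg] using le_add_inner_gradient_add_norm_sq hβ.le hdiff hlip w (w - γ • P w')
  have hexpand : ‖P w'‖ ^ 2 =
      ‖P w' - gradient L w‖ ^ 2 + 2 * inner ℝ (gradient L w) (P w') - ‖gradient L w‖ ^ 2 := by
    rw [norm_sub_sq_real, real_inner_comm]
    ring
  have hshift : ‖P w' - gradient L w‖ ^ 2 ≤ 2 * ‖P w' - gradient L w'‖ ^ 2 + 2 * (β * ρ) ^ 2 :=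
    norm_sub_sq_le_of_norm_sub_le (hlip.norm_sub_le_of_toNNReal hβ.le hww')
  have hcross : inner ℝ (gradient L w) (P w) ≤
      inner ℝ (gradient L w) (P w') + (1 / 2 * ‖gradient L w‖ ^ 2 + 1 / 2 * (β * ρ) ^ 2) :=
    real_inner_le_real_inner_add_of_norm_sub_le
      (hP.norm_sub_le_of_toNNReal hβ.le (by rwa [norm_sub_rev]))
  have hweight : 0 ≤ (1 - β * γ) * γ := mul_nonneg (by linarith) hγ
  rw [hexpand] at hdescent
  nlinarith [mul_le_mul_of_nonneg_left hshift (by positivity : 0 ≤ β * γ ^ 2 / 2),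
    mul_le_mul_of_nonneg_left hcross hweight]

/-- The deterministic one-step inequality in the proof of Theorem 2 of the paper,
combining the descent chain and the Cauchy–Schwarz cross-term bound: for `L`
differentiable with β-Lipschitz gradient, any β-Lipschitz `P : ℝ^d → ℝ^d`,
points `w, w'` with `‖w' − w‖ ≤ ρ`, and `γ ≥ 0` with `βγ ≤ 1`, the update
`w⁺ = w − γ·P(w')` satisfies the stated bound. -/
theorem fsam_one_step_bound {d : ℕ} (hd : 1 ≤ d)
    (L : EuclideanSpace ℝ (Fin d) → ℝ) (β : ℝ) (hβ : 0 < β)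
    (hdiff : Differentiable ℝ L)
    (hlip : LipschitzWith β.toNNReal (gradient L))
    (P : EuclideanSpace ℝ (Fin d) → EuclideanSpace ℝ (Fin d))
    (hP : LipschitzWith β.toNNReal P)
    (w w' : EuclideanSpace ℝ (Fin d)) (ρ : ℝ) (hρ : 0 ≤ ρ) (hww' : ‖w' - w‖ ≤ ρ)
    (γ : ℝ) (hγ : 0 ≤ γ) (hβγ : β * γ ≤ 1) :
    L (w - γ • P w') ≤
      L w - (γ ^ 2 * β / 2) * ‖gradient L w‖ ^ 2
        + γ ^ 2 * β * ‖P w' - gradient L w'‖ ^ 2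
        + γ ^ 2 * β ^ 3 * ρ ^ 2
        - (1 - β * γ) * γ * (inner ℝ (gradient L w) (P w) : ℝ)
        + (1 - β * γ) * γ * ((1 / 2) * ‖gradient L w‖ ^ 2 + (1 / 2) * β ^ 2 * ρ ^ 2) :=
  fsam_one_step_bound_general L β hβ hdiff hlip P hP w w' ρ hww' γ hγ hβγ
end

section
/- Let d ≥ 1, λ ∈ (0,1), T ≥ 1 an integer, and define the weights w_t := λ^{T−t}(1−λ)/(1−λ^T) for t = 1,…,T. Let f : ℝ^d → ℝ^d be β-Lipschitz (β > 0), and let x_1,…,x_T ∈ ℝ^d satisfy ‖x_s − x_{s−1}‖ ≤ γ·G for all s = 2,…,T, where γ, G > 0. Then ‖Σ_{t=1}^T w_t·f(x_t) − f(x_T)‖ ≤ γ·G·β·λ/((1−λ)(1−λ^T)). -/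
/-!
Since the weights are nonnegative and sum to one, the bias is at most
`Σ_t w_t ‖f(x_t) − f(x_T)‖ ≤ βγG Σ_t w_t (T − t)`, because `x_t` is at most `T − t` steps from `x_T`.
Reindexing by `k = T − t`, the last sum is `(1 − λ)/(1 − λ^T) · Σ_{k<T} k λ^k`, and the
truncated series is bounded by its full value `λ/(1 − λ)²`.
-/

open Finset

lemma dist_le_mul_of_forall_dist_succ_le {α : Type*} [PseudoMetricSpace α] (x : ℕ → α)
    {m n : ℕ} (hmn : m ≤ n) {c : ℝ} (hx : ∀ i ∈ Ico m n, dist (x i) (x (i + 1)) ≤ c) :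
    dist (x m) (x n) ≤ (n - m : ℕ) * c := by
  calc dist (x m) (x n) ≤ ∑ i ∈ Ico m n, dist (x i) (x (i + 1)) := dist_le_Ico_sum_dist x hmn
    _ ≤ #(Ico m n) • c := sum_le_card_nsmul _ _ _ hx
    _ = (n - m : ℕ) * c := by rw [Nat.card_Ico, nsmul_eq_mul]

lemma sum_Icc_one_sub {M : Type*} [AddCommMonoid M] (g : ℕ → M) (T : ℕ) :
    ∑ t ∈ Icc 1 T, g (T - t) = ∑ k ∈ range T, g k := by
  rw [← Finset.Ico_add_one_right_eq_Icc, sum_Ico_reflect _ _ le_rfl]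
  simp

lemma norm_sum_smul_sub_le {ι E : Type*} [SeminormedAddCommGroup E] [NormedSpace ℝ E]
    (s : Finset ι) {w : ι → ℝ} (hw₀ : ∀ i ∈ s, 0 ≤ w i) (hw₁ : ∑ i ∈ s, w i = 1)
    (v : ι → E) (a : E) :
    ‖∑ i ∈ s, w i • v i - a‖ ≤ ∑ i ∈ s, w i * ‖v i - a‖ := by
  have hsplit : ∑ i ∈ s, w i • v i - a = ∑ i ∈ s, w i • (v i - a) := by
    simp only [smul_sub, sum_sub_distrib, ← sum_smul, hw₁, one_smul]
  rw [hsplit]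
  refine (norm_sum_le _ _).trans (sum_le_sum fun i hi => ?_)
  rw [norm_smul, Real.norm_of_nonneg (hw₀ i hi)]

lemma norm_sum_smul_lipschitz_sub_le {α E : Type*} [PseudoMetricSpace α]
    [SeminormedAddCommGroup E] [NormedSpace ℝ E] {T : ℕ} {w : ℕ → ℝ}
    (hw₀ : ∀ t ∈ Icc 1 T, 0 ≤ w t) (hw₁ : ∑ t ∈ Icc 1 T, w t = 1)
    {K : NNReal} {f : α → E} (hf : LipschitzWith K f) {x : ℕ → α} {c : ℝ}
    (hx : ∀ i ∈ Ico 1 T, dist (x i) (x (i + 1)) ≤ c) :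
    ‖∑ t ∈ Icc 1 T, w t • f (x t) - f (x T)‖ ≤ K * c * ∑ t ∈ Icc 1 T, w t * (T - t : ℕ) := by
  refine (norm_sum_smul_sub_le _ hw₀ hw₁ _ _).trans ?_
  rw [mul_sum]
  refine sum_le_sum fun t ht => ?_
  obtain ⟨ht₁, htT⟩ := mem_Icc.mp ht
  have hpath : dist (x t) (x T) ≤ (T - t : ℕ) * c :=
    dist_le_mul_of_forall_dist_succ_le x htT fun i hi =>
      hx i (Ico_subset_Ico_left ht₁ hi)
  calc w t * ‖f (x t) - f (x T)‖ ≤ w t * (K * ((T - t : ℕ) * c)) := by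
        rw [← dist_eq_norm]
        exact mul_le_mul_of_nonneg_left ((hf.dist_le_mul _ _).trans
          (mul_le_mul_of_nonneg_left hpath K.2)) (hw₀ t ht)
    _ = K * c * (w t * (T - t : ℕ)) := by ring

section EMA

variable {lam : ℝ} (hlam : lam ∈ Set.Ioo (0 : ℝ) 1) {T : ℕ} (hT : 1 ≤ T)

noncomputable def emaWeight (lam : ℝ) (T t : ℕ) : ℝ :=
  lam ^ (T - t) * (1 - lam) / (1 - lam ^ T)

include hlam hT

lemma one_sub_pow_pos : 0 < 1 - lam ^ T := by
  linarith [pow_lt_one₀ hlam.1.le hlam.2 (by omega : T ≠ 0)]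

lemma emaWeight_nonneg (t : ℕ) : 0 ≤ emaWeight lam T t := by
  unfold emaWeight
  exact div_nonneg (mul_nonneg (pow_nonneg hlam.1.le _) (by linarith [hlam.2]))
    (one_sub_pow_pos hlam hT).le

lemma sum_emaWeight : ∑ t ∈ Icc 1 T, emaWeight lam T t = 1 := by
  have hlT := one_sub_pow_pos hlam hT
  have hne : lam - 1 ≠ 0 := by linarith [hlam.2]
  simp only [emaWeight, ← sum_div, ← sum_mul]
  rw [sum_Icc_one_sub (lam ^ ·), geom_sum_eq (sub_ne_zero.mp hne)]
  field_simp
  ring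

lemma sum_emaWeight_mul_sub_le :
    ∑ t ∈ Icc 1 T, emaWeight lam T t * (T - t : ℕ) ≤ lam / ((1 - lam) * (1 - lam ^ T)) := by
  have hlT := one_sub_pow_pos hlam hT
  have hl : 0 < 1 - lam := by linarith [hlam.2]
  have hgeom : HasSum (fun k : ℕ => (k : ℝ) * lam ^ k) (lam / (1 - lam) ^ 2) :=
    hasSum_coe_mul_geometric_of_norm_lt_one (by rw [Real.norm_of_nonneg hlam.1.le]; exact hlam.2)
  calc ∑ t ∈ Icc 1 T, emaWeight lam T t * (T - t : ℕ)
      = (1 - lam) / (1 - lam ^ T) * ∑ k ∈ range T, (k : ℝ) * lam ^ k := by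
        rw [← sum_Icc_one_sub (fun k : ℕ => (k : ℝ) * lam ^ k), mul_sum]
        refine sum_congr rfl fun t _ => ?_
        simp only [emaWeight]
        ring
    _ ≤ (1 - lam) / (1 - lam ^ T) * (lam / (1 - lam) ^ 2) := by
        gcongr
        exact sum_le_hasSum _ (fun k _ => by have := hlam.1; positivity) hgeom
    _ = lam / ((1 - lam) * (1 - lam ^ T)) := by
        field_simp

end EMA

theorem ema_bias_bound_general {d : ℕ}
    (lam : ℝ) (hlam : lam ∈ Set.Ioo (0 : ℝ) 1)
    (T : ℕ) (hT : 1 ≤ T)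
    (w : ℕ → ℝ) (hw : ∀ t ∈ Finset.Icc 1 T, w t = lam ^ (T - t) * (1 - lam) / (1 - lam ^ T))
    (f : EuclideanSpace ℝ (Fin d) → EuclideanSpace ℝ (Fin d))
    (β : ℝ) (hβ : 0 < β) (hf : LipschitzWith β.toNNReal f)
    (x : ℕ → EuclideanSpace ℝ (Fin d)) (γ G : ℝ) (hγ : 0 < γ) (hG : 0 < G)
    (hx : ∀ s ∈ Finset.Icc 2 T, ‖x s - x (s - 1)‖ ≤ γ * G) :
    ‖(∑ t ∈ Finset.Icc 1 T, w t • f (x t)) - f (x T)‖ ≤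
      γ * G * β * lam / ((1 - lam) * (1 - lam ^ T)) := by
  have hw' : ∀ t ∈ Icc 1 T, w t = emaWeight lam T t := hw
  have hsteps : ∀ i ∈ Ico 1 T, dist (x i) (x (i + 1)) ≤ γ * G := fun i hi => by
    have := hx (i + 1) (by simp only [mem_Icc, mem_Ico] at hi ⊢; omega)
    rwa [Nat.add_sub_cancel, ← dist_eq_norm, dist_comm] at this
  have hbias := norm_sum_smul_lipschitz_sub_le (fun t _ => emaWeight_nonneg hlam hT t)
    (sum_emaWeight hlam hT) hf hsteps
  rw [Real.coe_toNNReal β hβ.le] at hbias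
  rw [sum_congr rfl fun t ht => by rw [hw' t ht]]
  calc _ ≤ β * (γ * G) * (lam / ((1 - lam) * (1 - lam ^ T))) :=
        hbias.trans (by gcongr; exact sum_emaWeight_mul_sub_le hlam hT)
    _ = γ * G * β * lam / ((1 - lam) * (1 - lam ^ T)) := by ring

/-- The EMA bias bound in the proof of Theorem 1 of the paper: for EMA weights
`w_t = λ^{T−t}(1−λ)/(1−λ^T)`, a β-Lipschitz map `f` and iterates with consecutive
steps of norm at most `γG`,
`‖Σ_{t=1}^T w_t f(x_t) − f(x_T)‖ ≤ γGβλ/((1−λ)(1−λ^T))`. -/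
theorem ema_bias_bound {d : ℕ} (hd : 1 ≤ d)
    (lam : ℝ) (hlam : lam ∈ Set.Ioo (0 : ℝ) 1)
    (T : ℕ) (hT : 1 ≤ T)
    (w : ℕ → ℝ) (hw : ∀ t ∈ Finset.Icc 1 T, w t = lam ^ (T - t) * (1 - lam) / (1 - lam ^ T))
    (f : EuclideanSpace ℝ (Fin d) → EuclideanSpace ℝ (Fin d))
    (β : ℝ) (hβ : 0 < β) (hf : LipschitzWith β.toNNReal f)
    (x : ℕ → EuclideanSpace ℝ (Fin d)) (γ G : ℝ) (hγ : 0 < γ) (hG : 0 < G)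
    (hx : ∀ s ∈ Finset.Icc 2 T, ‖x s - x (s - 1)‖ ≤ γ * G) :
    ‖(∑ t ∈ Finset.Icc 1 T, w t • f (x t)) - f (x T)‖ ≤
      γ * G * β * lam / ((1 - lam) * (1 - lam ^ T)) :=
  ema_bias_bound_general lam hlam T hT w hw f β hβ hf x γ G hγ hG hx
end

section
/- Let (Ω, P) be a probability space, d ≥ 1, n ≥ 1, and let X_1, …, X_n : Ω → ℝ^d be independent random vectors with E[X_i] = 0, ‖X_i‖ ≤ μ almost surely (μ > 0), and E[‖X_i‖²] ≤ M (M > 0) for every i. Let w ∈ ℝ^n with w_i ≥ 0 for all i and Σ_{i=1}^n w_i = 1, and let V_w := Σ_{i=1}^n w_i²·E[‖X_i‖²]; assume V_w > 0. Then for every ε with 0 ≤ ε ≤ V_w/(μ·max_{1≤i≤n} w_i), P(‖Σ_{i=1}^n w_i·X_i‖ ≥ ε) ≤ exp(−ε²/(8M·Σ_{i=1}^n w_i²) + 1/4). -/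
/-!
Pinelis' argument for sums of independent bounded random vectors in a Hilbert space. If `W` is
centred, `‖W‖ ≤ c` and `E ‖W‖² ≤ v`, a second-order Taylor expansion of
`t ↦ cosh (l √(‖x + t W‖² + η))` gives `E cosh (l ‖x + W‖) ≤ cosh (l ‖x‖) (1 + l² v e^{lc} / 2)`:
the first-order term is linear in `W` and has mean zero, and the smoothing `η > 0`, which keeps
the norm away from its singularity at `0`, is removed by letting `η → 0`. Conditioning on the other
summands iterates this to `E cosh (l ‖∑ Yᵢ‖) ≤ exp (l² V)` as long as `l cᵢ ≤ 1/2`, so Markov's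
inequality with `l = ε / (2V)` bounds the tail by `2 exp (-ε² / (4V))`. For moderate `ε`,
Chebyshev's bound `V / ε²` (with `E ‖∑ Yᵢ‖² = ∑ E ‖Yᵢ‖²`) is better, and for small `ε` there is
nothing to prove. The weighted inequality is the case `Yᵢ = wᵢ Xᵢ`, `cᵢ = wᵢ μ`,
`V = M ∑ wᵢ²`.
-/

open MeasureTheory ProbabilityTheory Real Set
open scoped RealInnerProductSpace Topology

lemma Real.sinh_le_mul_cosh {x : ℝ} (hx : 0 ≤ x) : sinh x ≤ x * cosh x := by
  have hmono : MonotoneOn (fun y ↦ y * cosh y - sinh y) (Ici 0) := by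
    refine monotoneOn_of_deriv_nonneg (convex_Ici 0) (by fun_prop) (by fun_prop) fun y hy ↦ ?_
    rw [interior_Ici] at hy
    rw [(((hasDerivAt_id' y).fun_mul (hasDerivAt_cosh y)).fun_sub (hasDerivAt_sinh y)).deriv]
    nlinarith [sinh_nonneg_iff.2 (le_of_lt hy), mem_Ioi.1 hy]
  simpa using hmono self_mem_Ici hx hx

lemma Real.cosh_add_le_cosh_mul_exp (x : ℝ) {y : ℝ} (hy : 0 ≤ y) :
    cosh (x + y) ≤ cosh x * exp y := by
  have hsinh : sinh x ≤ cosh x := by rw [← sub_nonneg, cosh_sub_sinh]; positivity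
  rw [cosh_add, ← cosh_add_sinh y]
  nlinarith [sinh_nonneg_iff.2 hy, cosh_pos x]

lemma Real.one_div_eight_mul_le_exp_neg_add_quarter {x : ℝ} (h₁ : 1 / 4 ≤ x) (h₂ : x ≤ 1) :
    1 / (8 * x) ≤ exp (-x + 1 / 4) := by
  set u := x - 1 / 4 with hu_def
  have hu₀ : 0 ≤ u := by linarith
  -- `exp u ≤ 1 + u * exp u ≤ 1 + 3 * u` for `0 ≤ u ≤ 1`
  have hneg := mul_le_mul_of_nonneg_left (add_one_le_exp (-u)) (exp_pos u).le
  have he : exp u ≤ 3 :=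
    (exp_le_exp.2 (by linarith)).trans (exp_one_lt_d9.le.trans (by norm_num))
  rw [← exp_add, add_neg_cancel, exp_zero] at hneg
  rw [show -x + 1 / 4 = -u by ring, exp_neg, one_div, inv_le_inv₀ (by linarith) (exp_pos u)]
  nlinarith [mul_le_mul_of_nonneg_left he hu₀]

lemma Real.two_mul_exp_neg_two_mul_le_exp_neg_add_quarter {x : ℝ} (hx : 1 ≤ x) :
    2 * exp (-2 * x) ≤ exp (-x + 1 / 4) := by
  have h2 : 2 ≤ exp (x + 1 / 4) := by
    linarith [add_one_le_exp 1, exp_le_exp.2 (by linarith : (1 : ℝ) ≤ x + 1 / 4)]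
  calc 2 * exp (-2 * x) ≤ exp (x + 1 / 4) * exp (-2 * x) := by gcongr
    _ = exp (-x + 1 / 4) := by rw [← exp_add]; ring_nf

lemma le_add_deriv_add_half_of_deriv2_le {g g' g'' : ℝ → ℝ} {B : ℝ}
    (hg : ∀ t, HasDerivAt g (g' t) t) (hg' : ∀ t, HasDerivAt g' (g'' t) t)
    (hB : ∀ t ∈ Icc (0 : ℝ) 1, g'' t ≤ B) :
    g 1 ≤ g 0 + g' 0 + B / 2 := by
  have hφ t : HasDerivAt (fun t ↦ B * t ^ 2 / 2 - g t) (B * t - g' t) t := by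
    refine ((((hasDerivAt_pow 2 t).const_mul B).div_const 2).fun_sub (hg t)).congr_deriv ?_
    push_cast
    ring
  have hφ' t : HasDerivAt (fun t ↦ B * t - g' t) (B - g'' t) t := by
    simpa using ((hasDerivAt_id' t).const_mul B).fun_sub (hg' t)
  -- `B t² / 2 - g` is convex, hence above its tangent line at `0`.
  have hconv : ConvexOn ℝ (Icc 0 1) (fun t ↦ B * t ^ 2 / 2 - g t) :=
    convexOn_of_hasDerivWithinAt2_nonneg (convex_Icc 0 1)
      (HasDerivAt.continuousOn fun t _ ↦ hφ t) (fun t _ ↦ (hφ t).hasDerivWithinAt)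
      (fun t _ ↦ (hφ' t).hasDerivWithinAt)
      fun t ht ↦ sub_nonneg.2 (hB t (interior_subset ht))
  have := hconv.le_slope_of_hasDerivAt (left_mem_Icc.2 zero_le_one)
    (right_mem_Icc.2 zero_le_one) zero_lt_one (hφ 0)
  simp only [slope_def_field] at this
  linarith

-- The hypothesis on `u = ρ'` says `ρ ρ'' + ρ' ^ 2 = b`, i.e. `ρ ^ 2` is a quadratic with
-- leading coefficient `b`; with `sinh z ≤ z cosh z` it gives `(cosh (l ρ))'' ≤ l ^ 2 b cosh (l ρ)`.
lemma cosh_mul_le_of_hasDerivAt {l b B : ℝ} {ρ u : ℝ → ℝ} (hl : 0 ≤ l) (hρ_pos : ∀ t, 0 < ρ t)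
    (hρ : ∀ t, HasDerivAt ρ (u t) t) (hu : ∀ t, HasDerivAt u ((b - u t ^ 2) / ρ t) t)
    (hu_sq : ∀ t, u t ^ 2 ≤ b) (hB : ∀ t ∈ Icc (0 : ℝ) 1, cosh (l * ρ t) ≤ B) :
    cosh (l * ρ 1) ≤ cosh (l * ρ 0) + l * sinh (l * ρ 0) * u 0 + l ^ 2 * b * B / 2 := by
  have hg t : HasDerivAt (fun t ↦ cosh (l * ρ t)) (l * sinh (l * ρ t) * u t) t := by
    simpa [mul_assoc, mul_comm, mul_left_comm] using ((hρ t).const_mul l).cosh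
  have hg' t : HasDerivAt (fun t ↦ l * sinh (l * ρ t) * u t)
      (l ^ 2 * cosh (l * ρ t) * u t ^ 2 + l * sinh (l * ρ t) / ρ t * (b - u t ^ 2)) t := by
    refine ((((hρ t).const_mul l).sinh.const_mul l).fun_mul (hu t)).congr_deriv ?_
    field_simp
  refine le_add_deriv_add_half_of_deriv2_le hg hg' fun t ht ↦ ?_
  have hsinh : l * sinh (l * ρ t) / ρ t ≤ l ^ 2 * cosh (l * ρ t) := by
    rw [div_le_iff₀ (hρ_pos t)]
    nlinarith [sinh_le_mul_cosh (mul_nonneg hl (hρ_pos t).le)]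
  nlinarith [mul_le_mul_of_nonneg_right hsinh (sub_nonneg.2 (hu_sq t)),
    mul_le_mul_of_nonneg_left (hB t ht) (by nlinarith [hu_sq t] : 0 ≤ l ^ 2 * b)]

lemma sqrt_norm_add_sq_add_le {E : Type*} [SeminormedAddCommGroup E] {η : ℝ} (hη : 0 ≤ η)
    (z w : E) :
    √(‖z + w‖ ^ 2 + η) ≤ √(‖z‖ ^ 2 + η) + ‖w‖ := by
  have hz : ‖z‖ ≤ √(‖z‖ ^ 2 + η) := Real.le_sqrt_of_sq_le (by linarith)
  rw [Real.sqrt_le_left (by positivity)]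
  nlinarith [norm_add_le z w, norm_nonneg (z + w), norm_nonneg w, norm_nonneg z,
    Real.sq_sqrt (by positivity : 0 ≤ ‖z‖ ^ 2 + η)]

section Measure

variable {Ω E : Type*} [MeasurableSpace Ω] {P : Measure Ω} [SeminormedAddCommGroup E]

lemma integrable_cosh_mul_norm [IsFiniteMeasure P] {X : Ω → E} (hX : AEStronglyMeasurable X P)
    {b : ℝ} (hb : ∀ᵐ ω ∂P, ‖X ω‖ ≤ b) (l : ℝ) : Integrable (fun ω ↦ cosh (l * ‖X ω‖)) P := by
  refine .of_bound (by fun_prop) (cosh (l * b)) ?_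
  filter_upwards [hb] with ω hω
  rw [Real.norm_of_nonneg (cosh_pos _).le, cosh_le_cosh, abs_mul, abs_mul, abs_norm]
  exact mul_le_mul_of_nonneg_left (hω.trans (le_abs_self b)) (abs_nonneg l)

lemma ae_norm_sum_le {ι : Type*} {Y : ι → Ω → E} {c : ι → ℝ}
    (hbdd : ∀ i, ∀ᵐ ω ∂P, ‖Y i ω‖ ≤ c i) (s : Finset ι) :
    ∀ᵐ ω ∂P, ‖∑ i ∈ s, Y i ω‖ ≤ ∑ i ∈ s, c i := by
  filter_upwards [(Filter.eventually_all_finset s).2 fun i _ ↦ hbdd i] with ω hω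
  exact (norm_sum_le _ _).trans (Finset.sum_le_sum hω)

lemma ProbabilityTheory.IndepFun.integral_le_integral_of_forall_integral_le [IsFiniteMeasure P]
    {α β : Type*} [MeasurableSpace α] [MeasurableSpace β] {U : Ω → α} {W : Ω → β}
    (hUW : IndepFun U W P) (hU : Measurable U) (hW : Measurable W) {f : α → β → ℝ} {g : α → ℝ}
    (hf : Measurable (Function.uncurry f)) (hg : Measurable g)
    (hfi : Integrable (fun ω ↦ f (U ω) (W ω)) P) (hgi : Integrable (fun ω ↦ g (U ω)) P)
    (hfg : ∀ u, ∫ ω, f u (W ω) ∂P ≤ g u) :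
    ∫ ω, f (U ω) (W ω) ∂P ≤ ∫ ω, g (U ω) ∂P := by
  have hmap := hUW.map_prod_eq_prod_map_map hU.aemeasurable hW.aemeasurable
  have hf_int : Integrable (Function.uncurry f) ((P.map U).prod (P.map W)) := by
    rwa [← hmap, integrable_map_measure hf.aestronglyMeasurable (hU.prodMk hW).aemeasurable]
  have hg_int : Integrable g (P.map U) := by
    rwa [integrable_map_measure hg.aestronglyMeasurable hU.aemeasurable]
  calc ∫ ω, f (U ω) (W ω) ∂P
      = ∫ p, Function.uncurry f p ∂(P.map fun ω ↦ (U ω, W ω)) :=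
        (integral_map (hU.prodMk hW).aemeasurable hf.aestronglyMeasurable).symm
    _ = ∫ u, ∫ w, f u w ∂(P.map W) ∂(P.map U) := by rw [hmap, integral_prod _ hf_int]; rfl
    _ ≤ ∫ u, g u ∂(P.map U) := by
        refine integral_mono hf_int.integral_prod_left hg_int fun u ↦ ?_
        exact (integral_map (f := f u) hW.aemeasurable
          (hf.comp measurable_prodMk_left).aestronglyMeasurable).trans_le (hfg u)
    _ = ∫ ω, g (U ω) ∂P := integral_map hU.aemeasurable hg.aestronglyMeasurable

lemma ProbabilityTheory.iIndepFun.indepFun_sum_apply_of_notMem {ι β : Type*} [AddCommMonoid β]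
    [MeasurableSpace β] [MeasurableAdd₂ β] {Y : ι → Ω → β} (hY : iIndepFun Y P)
    (hmeas : ∀ i, Measurable (Y i)) {s : Finset ι} {a : ι} (ha : a ∉ s) :
    IndepFun (fun ω ↦ ∑ i ∈ s, Y i ω) (Y a) P := by
  simpa only [← Finset.sum_apply] using hY.indepFun_finsetSum_of_notMem hmeas ha

end Measure

section InnerProductSpace

variable {E : Type*} [NormedAddCommGroup E] [InnerProductSpace ℝ E]

lemma hasDerivAt_sqrt_norm_add_smul_sq_add {η : ℝ} (hη : 0 < η) (x y : E) (t : ℝ) :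
    HasDerivAt (fun t : ℝ ↦ √(‖x + t • y‖ ^ 2 + η))
      (⟪x + t • y, y⟫ / √(‖x + t • y‖ ^ 2 + η)) t := by
  have hline : HasDerivAt (fun t : ℝ ↦ x + t • y) y t := by
    simpa using ((hasDerivAt_id t).smul_const y).const_add x
  refine ((hline.norm_sq.add_const η).sqrt (by positivity)).congr_deriv ?_
  field_simp

lemma cosh_mul_norm_add_le {l η : ℝ} (hl : 0 ≤ l) (hη : 0 < η) (x y : E) :
    cosh (l * ‖x + y‖) ≤
      cosh (l * √(‖x‖ ^ 2 + η)) * (1 + l ^ 2 * ‖y‖ ^ 2 / 2 * exp (l * ‖y‖))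
        + l * sinh (l * √(‖x‖ ^ 2 + η)) / √(‖x‖ ^ 2 + η) * ⟪x, y⟫ := by
  set ρ : ℝ → ℝ := fun t ↦ √(‖x + t • y‖ ^ 2 + η) with hρ_def
  set u : ℝ → ℝ := fun t ↦ ⟪x + t • y, y⟫ / ρ t with hu_def
  have hρ_pos t : 0 < ρ t := Real.sqrt_pos.2 (by positivity)
  have hu t : HasDerivAt u ((‖y‖ ^ 2 - u t ^ 2) / ρ t) t := by
    have hp : HasDerivAt (fun t : ℝ ↦ ⟪x + t • y, y⟫) (‖y‖ ^ 2) t := by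
      simp only [inner_add_left, inner_smul_left, real_inner_self_eq_norm_sq, RCLike.conj_to_real]
      simpa using ((hasDerivAt_id t).mul_const (‖y‖ ^ 2)).const_add ⟪x, y⟫
    refine (hp.fun_div (hasDerivAt_sqrt_norm_add_smul_sq_add hη x y t)
      (hρ_pos t).ne').congr_deriv ?_
    have := (hρ_pos t).ne'
    simp only [hu_def, hρ_def] at this ⊢
    field_simp
  have hu_sq t : u t ^ 2 ≤ ‖y‖ ^ 2 := by
    rw [hu_def, div_pow, div_le_iff₀ (by positivity [hρ_pos t]), hρ_def,
      Real.sq_sqrt (by positivity)]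
    have := abs_real_inner_le_norm (x + t • y) y
    nlinarith [abs_nonneg ⟪x + t • y, y⟫, sq_abs ⟪x + t • y, y⟫, norm_nonneg (x + t • y),
      norm_nonneg y]
  have hcosh : ∀ t ∈ Icc (0 : ℝ) 1, cosh (l * ρ t) ≤ cosh (l * ρ 0) * exp (l * ‖y‖) := by
    intro t ht
    have hρt : ρ t ≤ ρ 0 + ‖y‖ := by
      have := sqrt_norm_add_sq_add_le hη.le x (t • y)
      rw [norm_smul, Real.norm_of_nonneg ht.1] at this
      simp only [hρ_def, zero_smul, add_zero]
      nlinarith [norm_nonneg y, ht.2]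
    refine le_trans ?_ (cosh_add_le_cosh_mul_exp _ (by positivity))
    rw [cosh_le_cosh, abs_of_nonneg (by positivity [hρ_pos t]),
      abs_of_nonneg (by positivity [hρ_pos 0])]
    nlinarith
  have htaylor := cosh_mul_le_of_hasDerivAt hl hρ_pos
    (hasDerivAt_sqrt_norm_add_smul_sq_add hη x y) hu hu_sq hcosh
  have hρ1 : cosh (l * ‖x + y‖) ≤ cosh (l * ρ 1) := by
    rw [cosh_le_cosh, abs_of_nonneg (by positivity), abs_of_nonneg (by positivity [hρ_pos 1])]
    exact mul_le_mul_of_nonneg_left (Real.le_sqrt_of_sq_le (by simp [hη.le])) hl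
  simp only [hρ_def, zero_smul, one_smul, add_zero] at htaylor hρ1
  refine (hρ1.trans htaylor).trans_eq ?_
  ring

variable {Ω : Type*} [MeasurableSpace Ω] {P : Measure Ω} [IsProbabilityMeasure P]

lemma integral_cosh_mul_norm_const_add_le_of_pos [CompleteSpace E] {W : Ω → E}
    (hW : AEStronglyMeasurable W P) {c v l η : ℝ} (hl : 0 ≤ l) (hη : 0 < η)
    (hbdd : ∀ᵐ ω ∂P, ‖W ω‖ ≤ c) (hmean : ∫ ω, W ω ∂P = 0) (hvar : ∫ ω, ‖W ω‖ ^ 2 ∂P ≤ v)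
    (x : E) :
    ∫ ω, cosh (l * ‖x + W ω‖) ∂P ≤
      cosh (l * √(‖x‖ ^ 2 + η)) * (1 + l ^ 2 * v / 2 * exp (l * c)) := by
  have hW_int : Integrable W P := .of_bound hW c hbdd
  have hsq_int : Integrable (fun ω ↦ ‖W ω‖ ^ 2) P := by
    refine .of_bound (hW.norm.pow 2) (c ^ 2) ?_
    filter_upwards [hbdd] with ω hω
    simpa using pow_le_pow_left₀ (norm_nonneg _) hω 2
  have hx_add : ∀ᵐ ω ∂P, ‖x + W ω‖ ≤ ‖x‖ + c := by
    filter_upwards [hbdd] with ω hω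
    exact (norm_add_le _ _).trans (by linarith)
  set A := cosh (l * √(‖x‖ ^ 2 + η))
  set κ := l * sinh (l * √(‖x‖ ^ 2 + η)) / √(‖x‖ ^ 2 + η)
  have hA : 0 < A := cosh_pos _
  have hae : ∀ᵐ ω ∂P,
      cosh (l * ‖x + W ω‖) ≤ A + A * (l ^ 2 / 2 * exp (l * c)) * ‖W ω‖ ^ 2 + κ * ⟪x, W ω⟫ := by
    filter_upwards [hbdd] with ω hω
    refine (cosh_mul_norm_add_le hl hη x (W ω)).trans (le_of_sub_nonneg ?_)
    have := mul_le_mul_of_nonneg_left (exp_le_exp.2 (mul_le_mul_of_nonneg_left hω hl))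
      (by positivity : 0 ≤ A * l ^ 2 * ‖W ω‖ ^ 2)
    nlinarith
  have hquad_int : Integrable (fun ω ↦ A + A * (l ^ 2 / 2 * exp (l * c)) * ‖W ω‖ ^ 2) P :=
    (integrable_const A).add (hsq_int.const_mul _)
  have hlin_int : Integrable (fun ω ↦ κ * ⟪x, W ω⟫) P := (hW_int.const_inner x).const_mul κ
  calc ∫ ω, cosh (l * ‖x + W ω‖) ∂P
      ≤ ∫ ω, (A + A * (l ^ 2 / 2 * exp (l * c)) * ‖W ω‖ ^ 2 + κ * ⟪x, W ω⟫) ∂P :=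
        integral_mono_ae (integrable_cosh_mul_norm (by fun_prop) hx_add l)
          (hquad_int.add hlin_int) hae
    _ = A + A * (l ^ 2 / 2 * exp (l * c)) * ∫ ω, ‖W ω‖ ^ 2 ∂P := by
        rw [integral_add hquad_int hlin_int, integral_add (integrable_const A)
            (hsq_int.const_mul _), integral_const_mul, integral_const_mul,
          integral_inner hW_int, hmean]
        simp
    _ ≤ A * (1 + l ^ 2 * v / 2 * exp (l * c)) := by
        nlinarith [mul_le_mul_of_nonneg_left hvar
          (by positivity : 0 ≤ A * (l ^ 2 / 2 * exp (l * c)))]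

lemma integral_cosh_mul_norm_const_add_le [CompleteSpace E] {W : Ω → E}
    (hW : AEStronglyMeasurable W P) {c v l : ℝ} (hl : 0 ≤ l)
    (hbdd : ∀ᵐ ω ∂P, ‖W ω‖ ≤ c) (hmean : ∫ ω, W ω ∂P = 0) (hvar : ∫ ω, ‖W ω‖ ^ 2 ∂P ≤ v)
    (x : E) :
    ∫ ω, cosh (l * ‖x + W ω‖) ∂P ≤ cosh (l * ‖x‖) * (1 + l ^ 2 * v / 2 * exp (l * c)) := by
  set K := 1 + l ^ 2 * v / 2 * exp (l * c)
  have hlim : Filter.Tendsto (fun η ↦ cosh (l * √(‖x‖ ^ 2 + η)) * K) (𝓝[>] 0)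
      (𝓝 (cosh (l * ‖x‖) * K)) := by
    have hcont : Continuous fun η ↦ cosh (l * √(‖x‖ ^ 2 + η)) * K := by fun_prop
    simpa [Real.sqrt_sq (norm_nonneg x)] using (hcont.tendsto 0).mono_left nhdsWithin_le_nhds
  exact ge_of_tendsto hlim (eventually_nhdsWithin_of_forall fun η hη ↦
    integral_cosh_mul_norm_const_add_le_of_pos hW hl hη hbdd hmean hvar x)

namespace ProbabilityTheory

variable [CompleteSpace E] [MeasurableSpace E] [BorelSpace E]

lemma IndepFun.integral_norm_add_sq {U W : Ω → E} (hUW : IndepFun U W P) (hU : MemLp U 2 P)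
    (hW : MemLp W 2 P) (hmean : ∫ ω, W ω ∂P = 0) :
    ∫ ω, ‖U ω + W ω‖ ^ 2 ∂P = ∫ ω, ‖U ω‖ ^ 2 ∂P + ∫ ω, ‖W ω‖ ^ 2 ∂P := by
  have hU1 := hU.integrable one_le_two
  have hW1 := hW.integrable one_le_two
  have hinner : ∫ ω, ⟪U ω, W ω⟫ ∂P = 0 :=
    (hUW.integral_bilin hU1 hW1 (innerSL ℝ)).trans (by simp [hmean])
  have hinner_int : Integrable (fun ω ↦ ⟪U ω, W ω⟫) P :=
    hUW.integrable_bilin hU1 hW1 (innerSL ℝ)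
  have hU2 := hU.integrable_norm_pow two_ne_zero
  have hW2 := hW.integrable_norm_pow two_ne_zero
  have hU2_add : Integrable (fun ω ↦ ‖U ω‖ ^ 2 + 2 * ⟪U ω, W ω⟫) P :=
    hU2.add (hinner_int.const_mul 2)
  simp_rw [norm_add_sq_real]
  rw [integral_add hU2_add hW2, integral_add hU2 (hinner_int.const_mul 2), integral_const_mul,
    hinner, mul_zero, add_zero]

variable [SecondCountableTopology E]

lemma IndepFun.integral_cosh_mul_norm_add_le {U W : Ω → E} (hUW : IndepFun U W P)
    (hU : Measurable U) (hW : Measurable W) {b c v l : ℝ} (hl : 0 ≤ l)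
    (hUb : ∀ᵐ ω ∂P, ‖U ω‖ ≤ b) (hWb : ∀ᵐ ω ∂P, ‖W ω‖ ≤ c) (hmean : ∫ ω, W ω ∂P = 0)
    (hvar : ∫ ω, ‖W ω‖ ^ 2 ∂P ≤ v) :
    ∫ ω, cosh (l * ‖U ω + W ω‖) ∂P ≤
      (∫ ω, cosh (l * ‖U ω‖) ∂P) * (1 + l ^ 2 * v / 2 * exp (l * c)) := by
  have hUWb : ∀ᵐ ω ∂P, ‖U ω + W ω‖ ≤ b + c := by
    filter_upwards [hUb, hWb] with ω h₁ h₂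
    exact (norm_add_le _ _).trans (add_le_add h₁ h₂)
  rw [← integral_mul_const]
  exact hUW.integral_le_integral_of_forall_integral_le hU hW
    (f := fun u w ↦ cosh (l * ‖u + w‖))
    (by fun_prop : Continuous fun p : E × E ↦ cosh (l * ‖p.1 + p.2‖)).measurable (by fun_prop)
    (integrable_cosh_mul_norm (by fun_prop) hUWb l)
    ((integrable_cosh_mul_norm hU.aestronglyMeasurable hUb l).mul_const _)
    (integral_cosh_mul_norm_const_add_le hW.aestronglyMeasurable hl hWb hmean hvar)

variable {ι : Type*} {Y : ι → Ω → E}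

lemma iIndepFun.integral_norm_sum_sq (hY : iIndepFun Y P)
    (hmeas : ∀ i, Measurable (Y i)) (hY2 : ∀ i, MemLp (Y i) 2 P)
    (hmean : ∀ i, ∫ ω, Y i ω ∂P = 0) (s : Finset ι) :
    ∫ ω, ‖∑ i ∈ s, Y i ω‖ ^ 2 ∂P = ∑ i ∈ s, ∫ ω, ‖Y i ω‖ ^ 2 ∂P := by
  classical
  induction s using Finset.induction_on with
  | empty => simp
  | insert a s ha ih =>
    simp_rw [Finset.sum_insert ha, add_comm (Y a _)]
    rw [(hY.indepFun_sum_apply_of_notMem hmeas ha).integral_norm_add_sq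
      (memLp_finsetSum s fun i _ ↦ hY2 i) (hY2 a) (hmean a), ih, add_comm]

lemma iIndepFun.integral_cosh_mul_norm_sum_le (hY : iIndepFun Y P)
    (hmeas : ∀ i, Measurable (Y i)) {c v : ι → ℝ} (hbdd : ∀ i, ∀ᵐ ω ∂P, ‖Y i ω‖ ≤ c i)
    (hmean : ∀ i, ∫ ω, Y i ω ∂P = 0) (hvar : ∀ i, ∫ ω, ‖Y i ω‖ ^ 2 ∂P ≤ v i) {l : ℝ}
    (hl : 0 ≤ l) (s : Finset ι) :
    ∫ ω, cosh (l * ‖∑ i ∈ s, Y i ω‖) ∂P ≤ ∏ i ∈ s, (1 + l ^ 2 * v i / 2 * exp (l * c i)) := by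
  classical
  induction s using Finset.induction_on with
  | empty => simp
  | insert a s ha ih =>
    have hv : 0 ≤ v a := (integral_nonneg fun _ ↦ sq_nonneg _).trans (hvar a)
    simp_rw [Finset.sum_insert ha, add_comm (Y a _)]
    rw [Finset.prod_insert ha, mul_comm]
    refine ((hY.indepFun_sum_apply_of_notMem hmeas ha).integral_cosh_mul_norm_add_le
      (Finset.measurable_sum s fun i _ ↦ hmeas i) (hmeas a) hl (ae_norm_sum_le hbdd s) (hbdd a)
      (hmean a) (hvar a)).trans ?_
    gcongr

variable [Fintype ι]

lemma iIndepFun.integral_cosh_mul_norm_sum_le_exp (hY : iIndepFun Y P)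
    (hmeas : ∀ i, Measurable (Y i)) {c : ι → ℝ} (hbdd : ∀ i, ∀ᵐ ω ∂P, ‖Y i ω‖ ≤ c i)
    (hmean : ∀ i, ∫ ω, Y i ω ∂P = 0) {l : ℝ} (hl : 0 ≤ l) (hlc : ∀ i, l * c i ≤ 1 / 2) :
    ∫ ω, cosh (l * ‖∑ i, Y i ω‖) ∂P ≤ exp (l ^ 2 * ∑ i, ∫ ω, ‖Y i ω‖ ^ 2 ∂P) := by
  refine (hY.integral_cosh_mul_norm_sum_le hmeas hbdd hmean (fun i ↦ le_rfl) hl _).trans ?_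
  rw [Finset.mul_sum, exp_sum]
  refine Finset.prod_le_prod (fun i _ ↦ by positivity) fun i _ ↦ ?_
  have hexp : exp (l * c i) ≤ 2 := by
    have := exp_bound_div_one_sub_of_interval' (x := 1 / 2) (by norm_num) (by norm_num)
    exact (exp_le_exp.2 (hlc i)).trans (by linarith)
  have hv : 0 ≤ l ^ 2 * ∫ ω, ‖Y i ω‖ ^ 2 ∂P := by positivity
  nlinarith [add_one_le_exp (l ^ 2 * ∫ ω, ‖Y i ω‖ ^ 2 ∂P)]

lemma iIndepFun.sq_mul_measureReal_norm_sum_ge_le (hY : iIndepFun Y P)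
    (hmeas : ∀ i, Measurable (Y i)) (hY2 : ∀ i, MemLp (Y i) 2 P)
    (hmean : ∀ i, ∫ ω, Y i ω ∂P = 0) {ε : ℝ} (hε : 0 ≤ ε) :
    ε ^ 2 * P.real {ω | ε ≤ ‖∑ i, Y i ω‖} ≤ ∑ i, ∫ ω, ‖Y i ω‖ ^ 2 ∂P := by
  have hmarkov := mul_meas_ge_le_integral_of_nonneg (ae_of_all _ fun _ ↦ sq_nonneg _)
    ((memLp_finsetSum Finset.univ fun i _ ↦ hY2 i).integrable_norm_pow two_ne_zero) (ε ^ 2)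
  rw [hY.integral_norm_sum_sq hmeas hY2 hmean] at hmarkov
  refine le_trans (mul_le_mul_of_nonneg_left (measureReal_mono fun ω hω ↦ ?_) (sq_nonneg ε))
    hmarkov
  exact pow_le_pow_left₀ hε hω 2

lemma iIndepFun.measureReal_norm_sum_ge_le (hY : iIndepFun Y P)
    (hmeas : ∀ i, Measurable (Y i)) {c : ι → ℝ} (hbdd : ∀ i, ∀ᵐ ω ∂P, ‖Y i ω‖ ≤ c i)
    (hmean : ∀ i, ∫ ω, Y i ω ∂P = 0) {l : ℝ} (hl : 0 ≤ l) (hlc : ∀ i, l * c i ≤ 1 / 2)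
    {ε : ℝ} (hε : 0 ≤ ε) :
    P.real {ω | ε ≤ ‖∑ i, Y i ω‖} ≤
      2 * exp (l ^ 2 * ∑ i, ∫ ω, ‖Y i ω‖ ^ 2 ∂P - l * ε) := by
  have hmarkov := mul_meas_ge_le_integral_of_nonneg (ae_of_all _ fun _ ↦ (cosh_pos _).le)
    (integrable_cosh_mul_norm (by fun_prop) (ae_norm_sum_le hbdd Finset.univ) l) (cosh (l * ε))
  have hsub : {ω | ε ≤ ‖∑ i, Y i ω‖} ⊆ {ω | cosh (l * ε) ≤ cosh (l * ‖∑ i, Y i ω‖)} := by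
    intro ω hω
    rw [mem_ofPred_eq, cosh_le_cosh, abs_of_nonneg (by positivity),
      abs_of_nonneg (by positivity)]
    exact mul_le_mul_of_nonneg_left hω hl
  have hchernoff : cosh (l * ε) * P.real {ω | ε ≤ ‖∑ i, Y i ω‖} ≤
      exp (l ^ 2 * ∑ i, ∫ ω, ‖Y i ω‖ ^ 2 ∂P) :=
    (mul_le_mul_of_nonneg_left (measureReal_mono hsub) (cosh_pos _).le).trans
      (hmarkov.trans (hY.integral_cosh_mul_norm_sum_le_exp hmeas hbdd hmean hl hlc))
  have hcosh : exp (l * ε) ≤ 2 * cosh (l * ε) := by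
    rw [cosh_eq]; linarith [exp_pos (-(l * ε))]
  rw [sub_eq_add_neg, exp_add, exp_neg, ← mul_assoc, ← div_eq_mul_inv,
    le_div_iff₀ (exp_pos _)]
  nlinarith [mul_le_mul_of_nonneg_left hcosh (measureReal_nonneg (μ := P)
    (s := {ω | ε ≤ ‖∑ i, Y i ω‖}))]

theorem iIndepFun.measure_norm_sum_ge_le (hY : iIndepFun Y P)
    (hmeas : ∀ i, Measurable (Y i)) {c : ι → ℝ} (hbdd : ∀ i, ∀ᵐ ω ∂P, ‖Y i ω‖ ≤ c i)
    (hmean : ∀ i, ∫ ω, Y i ω ∂P = 0) {V : ℝ} (hV : 0 < V)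
    (hvar : ∑ i, ∫ ω, ‖Y i ω‖ ^ 2 ∂P ≤ V) {ε : ℝ} (hε : 0 ≤ ε) (hεc : ∀ i, ε * c i ≤ V) :
    P {ω | ε ≤ ‖∑ i, Y i ω‖} ≤ ENNReal.ofReal (exp (-ε ^ 2 / (8 * V) + 1 / 4)) := by
  rw [ENNReal.le_ofReal_iff_toReal_le (measure_ne_top _ _) (exp_pos _).le, ← measureReal_def]
  set x := ε ^ 2 / (8 * V) with hx
  rw [neg_div, ← hx]
  rcases le_or_gt x (1 / 4) with h₁ | h₁
  · exact measureReal_le_one.trans (one_le_exp (by linarith))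
  have hε₀ : 0 < ε ^ 2 := by
    by_contra! h
    linarith [div_nonpos_of_nonpos_of_nonneg h (by positivity : (0 : ℝ) ≤ 8 * V)]
  rcases le_or_gt x 1 with h₂ | h₂
  · refine le_trans ?_ (one_div_eight_mul_le_exp_neg_add_quarter h₁.le h₂)
    have hcheb := hY.sq_mul_measureReal_norm_sum_ge_le hmeas
      (fun i ↦ .of_bound (hmeas i).aestronglyMeasurable _ (hbdd i)) hmean hε
    rw [hx, le_div_iff₀ (by positivity)]
    field_simp
    nlinarith
  · set l := ε / (2 * V)
    have hlc i : l * c i ≤ 1 / 2 := by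
      rw [div_mul_eq_mul_div, div_le_iff₀ (by positivity)]
      linarith [hεc i]
    refine (hY.measureReal_norm_sum_ge_le hmeas hbdd hmean (by positivity) hlc hε).trans
      (le_trans ?_ (two_mul_exp_neg_two_mul_le_exp_neg_add_quarter h₂.le))
    gcongr
    calc l ^ 2 * ∑ i, ∫ ω, ‖Y i ω‖ ^ 2 ∂P - l * ε ≤ l ^ 2 * V - l * ε := by gcongr
      _ = -2 * x := by
        simp only [l, hx]
        field_simp
        ring

end ProbabilityTheory

end InnerProductSpace

theorem weighted_vector_bernstein_general
    {Ω : Type*} [MeasureSpace Ω] [IsProbabilityMeasure (volume : Measure Ω)]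
    {d : ℕ} {n : ℕ} (hn : 1 ≤ n)
    (X : Fin n → Ω → EuclideanSpace ℝ (Fin d))
    (hmeas : ∀ i, Measurable (X i))
    (hindep : ProbabilityTheory.iIndepFun X volume)
    (hmean : ∀ i, (∫ ω, X i ω) = 0)
    (μ : ℝ) (hμ : 0 < μ)
    (hbdd : ∀ i, ∀ᵐ ω ∂(volume : Measure Ω), ‖X i ω‖ ≤ μ)
    (M : ℝ) (hvar : ∀ i, (∫ ω, ‖X i ω‖ ^ 2) ≤ M)
    (w : Fin n → ℝ) (hw0 : ∀ i, 0 ≤ w i)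
    (Vw : ℝ) (hVw : Vw = ∑ i, (w i) ^ 2 * ∫ ω, ‖X i ω‖ ^ 2) (hVwpos : 0 < Vw)
    (ε : ℝ) (hε0 : 0 ≤ ε)
    (hεV : ε ≤ Vw / (μ * Finset.univ.sup' (Finset.univ_nonempty_iff.mpr
      ⟨⟨0, hn⟩⟩) w)) :
    (volume {ω | ε ≤ ‖∑ i, w i • X i ω‖}) ≤
      ENNReal.ofReal (Real.exp (-(ε ^ 2) / (8 * M * ∑ i, (w i) ^ 2) + 1 / 4)) := by
  set m := Finset.univ.sup' (Finset.univ_nonempty_iff.mpr ⟨⟨0, hn⟩⟩) w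
  have hVwM : Vw ≤ M * ∑ i, w i ^ 2 := by
    rw [hVw, Finset.mul_sum]
    refine Finset.sum_le_sum fun i _ ↦ ?_
    rw [mul_comm M]
    exact mul_le_mul_of_nonneg_left (hvar i) (sq_nonneg _)
  have hbound i : ∀ᵐ ω, ‖w i • X i ω‖ ≤ w i * μ := by
    filter_upwards [hbdd i] with ω hω
    rw [norm_smul, Real.norm_of_nonneg (hw0 i)]
    exact mul_le_mul_of_nonneg_left hω (hw0 i)
  have hsecond : ∑ i, ∫ ω, ‖w i • X i ω‖ ^ 2 = Vw := by
    simp_rw [hVw, norm_smul, mul_pow, Real.norm_eq_abs, sq_abs, integral_const_mul]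
  have hεc i : ε * (w i * μ) ≤ Vw := by
    have hwm : w i ≤ m := Finset.le_sup' w (Finset.mem_univ i)
    rcases le_or_gt m 0 with hm | hm
    · simp [le_antisymm (hwm.trans hm) (hw0 i), hVwpos.le]
    · rw [le_div_iff₀ (by positivity)] at hεV
      calc ε * (w i * μ) ≤ ε * (μ * m) := by rw [mul_comm (w i)]; gcongr
        _ ≤ Vw := hεV
  have := (hindep.comp (fun i x ↦ w i • x) fun i ↦ measurable_const_smul (w i))
    |>.measure_norm_sum_ge_le (fun i ↦ (hmeas i).const_smul (w i)) hbound
      (fun i ↦ by simp [integral_smul, hmean]) (hVwpos.trans_le hVwM)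
      (hsecond.trans_le hVwM) hε0 fun i ↦ (hεc i).trans hVwM
  simpa only [mul_assoc, Function.comp_apply] using this

/-- Weighted Vector Bernstein inequality (Corollary A1 of the paper): let `X_1, …, X_n` be
independent mean-zero random vectors in `ℝ^d` with `‖X_i‖ ≤ μ` a.s. and `E[‖X_i‖²] ≤ M`,
and let `w` lie in the probability simplex. With `V_w = Σ w_i² E[‖X_i‖²] > 0`, for every
`ε` with `0 ≤ ε ≤ V_w/(μ·max_i w_i)`,
`P(‖Σ w_i X_i‖ ≥ ε) ≤ exp(−ε²/(8M Σ w_i²) + 1/4)`. -/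
theorem weighted_vector_bernstein
    {Ω : Type*} [MeasureSpace Ω] [IsProbabilityMeasure (volume : Measure Ω)]
    {d : ℕ} (hd : 1 ≤ d) {n : ℕ} (hn : 1 ≤ n)
    (X : Fin n → Ω → EuclideanSpace ℝ (Fin d))
    (hmeas : ∀ i, Measurable (X i))
    (hindep : ProbabilityTheory.iIndepFun X volume)
    (hmean : ∀ i, (∫ ω, X i ω) = 0)
    (μ : ℝ) (hμ : 0 < μ)
    (hbdd : ∀ i, ∀ᵐ ω ∂(volume : Measure Ω), ‖X i ω‖ ≤ μ)
    (M : ℝ) (hM : 0 < M) (hvar : ∀ i, (∫ ω, ‖X i ω‖ ^ 2) ≤ M)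
    (w : Fin n → ℝ) (hw0 : ∀ i, 0 ≤ w i) (hw1 : ∑ i, w i = 1)
    (Vw : ℝ) (hVw : Vw = ∑ i, (w i) ^ 2 * ∫ ω, ‖X i ω‖ ^ 2) (hVwpos : 0 < Vw)
    (ε : ℝ) (hε0 : 0 ≤ ε)
    (hεV : ε ≤ Vw / (μ * Finset.univ.sup' (Finset.univ_nonempty_iff.mpr
      ⟨⟨0, hn⟩⟩) w)) :
    (volume {ω | ε ≤ ‖∑ i, w i • X i ω‖}) ≤
      ENNReal.ofReal (Real.exp (-(ε ^ 2) / (8 * M * ∑ i, (w i) ^ 2) + 1 / 4)) :=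
  weighted_vector_bernstein_general hn X hmeas hindep hmean μ hμ hbdd M hvar w hw0 Vw hVw hVwpos ε
    hε0 hεV
end
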